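/- arXiv:1806.04610 — 6 statements merged into one kernel-verified Lean document; each statement's English description precedes it below -/
import Mathlib

section
/- Let Λ be a p×k real matrix that is pure with factor map f, and assume every column of Λ contains at least one nonzero entry (f is surjective). Let U be an invertible k×k real matrix. Then the matrix product ΛU has the same zero pattern as Λ (i.e., for all i, j: (ΛU)_{ij} = 0 if and only if Λ_{ij} = 0) if and only if U is a diagonal matrix. -/
open Matrix

/-- If `Λ` is a `p × k` pure matrix with surjective factor map `f`
(each row has exactly one nonzero entry, in column `f i`), and `U` is an invertible
`k × k` matrix, then `Λ * U` has the same zero pattern as `Λ` iff `U` is diagonal. -/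
theorem pure_loading_mul_same_zero_pattern_iff_diagonal
    {p k : ℕ} (f : Fin p → Fin k) (hf : Function.Surjective f)
    (Λ : Matrix (Fin p) (Fin k) ℝ)
    (hpure : ∀ (i : Fin p) (j : Fin k), Λ i j ≠ 0 ↔ j = f i)
    (U : Matrix (Fin k) (Fin k) ℝ) (hU : IsUnit U) :
    (∀ (i : Fin p) (j : Fin k), (Λ * U) i j = 0 ↔ Λ i j = 0) ↔ U.IsDiag := by
  have hzero : ∀ (i : Fin p) (j : Fin k), j ≠ f i → Λ i j = 0 := by
    intro i j hj
    by_contra h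
    exact hj ((hpure i j).mp h)
  have hne : ∀ i : Fin p, Λ i (f i) ≠ 0 := fun i => (hpure i (f i)).mpr rfl
  have hmul : ∀ (i : Fin p) (j : Fin k), (Λ * U) i j = Λ i (f i) * U (f i) j := by
    intro i j
    rw [Matrix.mul_apply]
    exact Finset.sum_eq_single (f i) (fun b _ hb => by rw [hzero i b hb, zero_mul])
      (fun h => absurd (Finset.mem_univ _) h)
  constructor
  · intro h a b hab
    obtain ⟨i, rfl⟩ := hf a
    have := (h i b).mpr (hzero i b (Ne.symm hab))
    rw [hmul] at this
    exact (mul_eq_zero.mp this).resolve_left (hne i)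
  · intro hdiag i j
    rw [hmul]
    rcases eq_or_ne j (f i) with rfl | hj
    · -- both nonzero: need U (f i) (f i) ≠ 0
      have hdet : U.det ≠ 0 := by
        have := hU.map (Matrix.detMonoidHom (n := Fin k) (R := ℝ))
        simpa [isUnit_iff_ne_zero] using this
      have hUdiag : Matrix.diagonal U.diag = U := hdiag.diagonal_diag
      have hdprod : U.det = ∏ x, U.diag x := by
        conv_lhs => rw [← hUdiag]
        rw [Matrix.det_diagonal]
      have hUne : U (f i) (f i) ≠ 0 := by
        have : ∏ x, U.diag x ≠ 0 := hdprod ▸ hdet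
        have := Finset.prod_ne_zero_iff.mp this (f i) (Finset.mem_univ _)
        simpa [Matrix.diag] using this
      constructor
      · intro h
        rcases mul_eq_zero.mp h with h | h
        · exact absurd h (hne i)
        · exact absurd h hUne
      · intro h; exact absurd h (hne i)
    · have : U (f i) j = 0 := hdiag (fun h => hj h.symm)
      simp [this, hzero i j hj]
end

section
/- Let Λ be a p×k real matrix that is pure with factor map f, let C be a k×k real matrix with unit diagonal, let D be a diagonal p×p real matrix, and set S = ΛCΛᵀ + D. Let q ≠ r be two factors with C_{qr} ≠ 0, let i ≠ j be two indicators of factor q (f(i) = f(j) = q) and let l be an indicator of factor r (f(l) = r). Then S_{jl} ≠ 0 and (S_{ij} · S_{il}) / S_{jl} = Λ_{iq}². -/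
open Matrix

lemma pure_entry {p k : ℕ} (f : Fin p → Fin k)
    (Λ : Matrix (Fin p) (Fin k) ℝ)
    (hpure : ∀ (i : Fin p) (j : Fin k), Λ i j ≠ 0 ↔ j = f i)
    (C : Matrix (Fin k) (Fin k) ℝ) (a b : Fin p) :
    (Λ * C * Λᵀ) a b = Λ a (f a) * C (f a) (f b) * Λ b (f b) := by
  have hz : ∀ (c : Fin p) (s : Fin k), s ≠ f c → Λ c s = 0 := by
    intro c s hs
    by_contra h
    exact hs ((hpure c s).mp h)
  simp only [Matrix.mul_apply, Matrix.transpose_apply]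
  rw [Finset.sum_eq_single (f b)]
  · congr 1
    rw [Finset.sum_eq_single (f a)]
    · intro s _ hs; rw [hz a s hs, zero_mul]
    · intro h; exact absurd (Finset.mem_univ _) h
  · intro t _ ht; rw [hz b t ht, mul_zero]
  · intro h; exact absurd (Finset.mem_univ _) h

/-- In `S = ΛCΛᵀ + D` with pure `Λ` (factor map `f`), `C` with unit
diagonal, and diagonal `D`: if `q ≠ r` are factors with `C q r ≠ 0`, `i ≠ j` are two
indicators of `q`, and `l` is an indicator of `r`, then `S j l ≠ 0` and
`(S i j * S i l) / S j l = (Λ i q) ^ 2`. -/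
theorem loading_squared_from_covariances_cross_factor
    {p k : ℕ} (f : Fin p → Fin k)
    (Λ : Matrix (Fin p) (Fin k) ℝ)
    (hpure : ∀ (i : Fin p) (j : Fin k), Λ i j ≠ 0 ↔ j = f i)
    (C : Matrix (Fin k) (Fin k) ℝ) (hCdiag : ∀ j, C j j = 1)
    (D : Matrix (Fin p) (Fin p) ℝ) (hD : D.IsDiag)
    (S : Matrix (Fin p) (Fin p) ℝ) (hS : S = Λ * C * Λᵀ + D)
    (q r : Fin k) (hqr : q ≠ r) (hCqr : C q r ≠ 0)
    (i j l : Fin p) (hij : i ≠ j)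
    (hi : f i = q) (hj : f j = q) (hl : f l = r) :
    S j l ≠ 0 ∧ (S i j * S i l) / S j l = (Λ i q) ^ 2 := by
  have hil : i ≠ l := fun h => hqr (hi ▸ hl ▸ h ▸ rfl)
  have hjl : j ≠ l := fun h => hqr (hj ▸ hl ▸ h ▸ rfl)
  have hΛi : Λ i q ≠ 0 := (hpure i q).mpr hi.symm
  have hΛj : Λ j q ≠ 0 := (hpure j q).mpr hj.symm
  have hΛl : Λ l r ≠ 0 := (hpure l r).mpr hl.symm
  have hSij : S i j = Λ i q * Λ j q := by
    rw [hS]; simp only [Matrix.add_apply, pure_entry f Λ hpure C, hi, hj, hCdiag,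
      hD hij, hl]
    ring
  have hSil : S i l = Λ i q * C q r * Λ l r := by
    rw [hS]; simp only [Matrix.add_apply, pure_entry f Λ hpure C, hi, hl,
      hD hil]
    ring
  have hSjl : S j l = Λ j q * C q r * Λ l r := by
    rw [hS]; simp only [Matrix.add_apply, pure_entry f Λ hpure C, hj, hl,
      hD hjl]
    ring
  have hne : S j l ≠ 0 := by
    rw [hSjl]; exact mul_ne_zero (mul_ne_zero hΛj hCqr) hΛl
  refine ⟨hne, ?_⟩
  rw [hSij, hSil, hSjl]
  field_simp
end

section
/- Let Λ be a p×k real matrix that is pure with factor map f, let C be a k×k real matrix with unit diagonal, let D be a diagonal p×p real matrix, and set S = ΛCΛᵀ + D. Let i, j, l be three pairwise distinct indicators of the same factor q (f(i) = f(j) = f(l) = q). Then S_{jl} ≠ 0 and (S_{ij} · S_{il}) / S_{jl} = Λ_{iq}². -/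
open Matrix

/-- In `S = ΛCΛᵀ + D` with pure `Λ` (factor map `f`), `C` with unit
diagonal, and diagonal `D`: if `i, j, l` are three pairwise distinct indicators of the
same factor `q`, then `S j l ≠ 0` and `(S i j * S i l) / S j l = (Λ i q) ^ 2`. -/
theorem loading_squared_from_covariances_same_factor
    {p k : ℕ} (f : Fin p → Fin k)
    (Λ : Matrix (Fin p) (Fin k) ℝ)
    (hpure : ∀ (i : Fin p) (j : Fin k), Λ i j ≠ 0 ↔ j = f i)
    (C : Matrix (Fin k) (Fin k) ℝ) (hCdiag : ∀ j, C j j = 1)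
    (D : Matrix (Fin p) (Fin p) ℝ) (hD : D.IsDiag)
    (S : Matrix (Fin p) (Fin p) ℝ) (hS : S = Λ * C * Λᵀ + D)
    (q : Fin k) (i j l : Fin p)
    (hij : i ≠ j) (hil : i ≠ l) (hjl : j ≠ l)
    (hi : f i = q) (hj : f j = q) (hl : f l = q) :
    S j l ≠ 0 ∧ (S i j * S i l) / S j l = (Λ i q) ^ 2 := by
  have key : ∀ a b : Fin p, a ≠ b → f a = q → f b = q → S a b = Λ a q * Λ b q := by
    intro a b hab ha hb
    rw [hS]
    simp only [Matrix.add_apply, pure_entry f Λ hpure C a b, ha, hb, hCdiag,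
      hD hab, add_zero, mul_one]
  have hΛi : Λ i q ≠ 0 := (hpure i q).mpr hi.symm
  have hΛj : Λ j q ≠ 0 := (hpure j q).mpr hj.symm
  have hΛl : Λ l q ≠ 0 := (hpure l q).mpr hl.symm
  have hjl' : S j l = Λ j q * Λ l q := key j l hjl hj hl
  refine ⟨by rw [hjl']; exact mul_ne_zero hΛj hΛl, ?_⟩
  rw [key i j hij hi hj, key i l hil hi hl, hjl']
  field_simp
end

section
/- (Identifiability of C.) Let f : {1,…,p} → {1,…,k} be surjective. For t ∈ {1, 2}, let Λ_t be a p×k real matrix that is pure with factor map f, let C_t be a k×k real symmetric positive definite matrix with unit diagonal, and let D_t be a diagonal p×p real matrix with nonnegative diagonal entries. Assume for each t: (i) for every factor j whose fiber f⁻¹(j) is a singleton {i}, Λ_t has Λ_{ij} = 1 and D_t has D_{ii} = 0; (ii) for every factor j, the first indicator i = min f⁻¹(j) has positive loading Λ_{ij} > 0. If Λ₁C₁Λ₁ᵀ + D₁ = Λ₂C₂Λ₂ᵀ + D₂, then C₁ = C₂. -/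
open Matrix

private lemma pure_entry_aux {p k : ℕ} {f : Fin p → Fin k} {Λ : Matrix (Fin p) (Fin k) ℝ}
    {C : Matrix (Fin k) (Fin k) ℝ}
    (hpure : ∀ i j, Λ i j ≠ 0 ↔ j = f i) (i i' : Fin p) :
    (Λ * C * Λᵀ) i i' = Λ i (f i) * C (f i) (f i') * Λ i' (f i') := by
  have hz : ∀ a b, b ≠ f a → Λ a b = 0 := fun a b h => by
    by_contra hc; exact h ((hpure a b).1 hc)
  rw [Matrix.mul_apply]
  rw [Finset.sum_eq_single (f i') (fun b _ hb => by
      rw [Matrix.transpose_apply, hz i' b hb, mul_zero])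
    (fun h => absurd (Finset.mem_univ _) h)]
  rw [Matrix.transpose_apply, Matrix.mul_apply]
  rw [Finset.sum_eq_single (f i) (fun b _ hb => by rw [hz i b hb, zero_mul])
    (fun h => absurd (Finset.mem_univ _) h)]

/-- **Identifiability of C.** Two pure Gaussian-copula-factor
parameterizations sharing the same surjective factor map, each with symmetric
positive definite interfactor correlation matrix with unit diagonal, diagonal
nonnegative residual matrix, loading `1` and residual `0` for single-indicator
factors, and positive first loading per factor, that imply the same covariance
matrix `ΛCΛᵀ + D`, have equal interfactor correlation matrices. -/
theorem interfactor_correlation_identifiable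
    {p k : ℕ} (f : Fin p → Fin k) (hf : Function.Surjective f)
    (Λ₁ Λ₂ : Matrix (Fin p) (Fin k) ℝ)
    (C₁ C₂ : Matrix (Fin k) (Fin k) ℝ)
    (D₁ D₂ : Matrix (Fin p) (Fin p) ℝ)
    (hpure₁ : ∀ (i : Fin p) (j : Fin k), Λ₁ i j ≠ 0 ↔ j = f i)
    (hpure₂ : ∀ (i : Fin p) (j : Fin k), Λ₂ i j ≠ 0 ↔ j = f i)
    (hC₁ : C₁.PosDef) (hC₂ : C₂.PosDef)
    (hC₁diag : ∀ j, C₁ j j = 1) (hC₂diag : ∀ j, C₂ j j = 1)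
    (hD₁ : D₁.IsDiag) (hD₂ : D₂.IsDiag)
    (hD₁nonneg : ∀ i, 0 ≤ D₁ i i) (hD₂nonneg : ∀ i, 0 ≤ D₂ i i)
    (hsingle₁ : ∀ (j : Fin k) (i : Fin p),
      Finset.univ.filter (fun i' => f i' = j) = {i} → Λ₁ i j = 1 ∧ D₁ i i = 0)
    (hsingle₂ : ∀ (j : Fin k) (i : Fin p),
      Finset.univ.filter (fun i' => f i' = j) = {i} → Λ₂ i j = 1 ∧ D₂ i i = 0)
    (hfirst₁ : ∀ (j : Fin k) (i : Fin p),
      f i = j → (∀ i', f i' = j → i ≤ i') → 0 < Λ₁ i j)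
    (hfirst₂ : ∀ (j : Fin k) (i : Fin p),
      f i = j → (∀ i', f i' = j → i ≤ i') → 0 < Λ₂ i j)
    (heq : Λ₁ * C₁ * Λ₁ᵀ + D₁ = Λ₂ * C₂ * Λ₂ᵀ + D₂) :
    C₁ = C₂ := by
  -- key off-diagonal equation
  have key : ∀ i i' : Fin p, i ≠ i' →
      Λ₁ i (f i) * C₁ (f i) (f i') * Λ₁ i' (f i') =
      Λ₂ i (f i) * C₂ (f i) (f i') * Λ₂ i' (f i') := by
    intro i i' hne
    have h1 := congrFun (congrFun heq i) i'
    simp only [Matrix.add_apply] at h1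
    rw [hD₁ hne, hD₂ hne, pure_entry_aux hpure₁, pure_entry_aux hpure₂] at h1
    linarith
  ext j j'
  by_cases hjj : j = j'
  · subst hjj; rw [hC₁diag, hC₂diag]
  -- fibers
  have hTne : ∀ j : Fin k, (Finset.univ.filter (fun i => f i = j)).Nonempty := by
    intro j; obtain ⟨i, hi⟩ := hf j; exact ⟨i, by simp [hi]⟩
  set i1 := (Finset.univ.filter (fun i => f i = j)).min' (hTne j) with hi1def
  set i1' := (Finset.univ.filter (fun i => f i = j')).min' (hTne j') with hi1'def
  have hfi1 : f i1 = j := by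
    have := Finset.min'_mem (Finset.univ.filter (fun i => f i = j)) (hTne j)
    simpa using this
  have hfi1' : f i1' = j' := by
    have := Finset.min'_mem (Finset.univ.filter (fun i => f i = j')) (hTne j')
    simpa using this
  have hmin1 : ∀ i', f i' = j → i1 ≤ i' := fun i' h =>
    Finset.min'_le _ _ (by simp [h])
  have hmin1' : ∀ i', f i' = j' → i1' ≤ i' := fun i' h =>
    Finset.min'_le _ _ (by simp [h])
  have ha : 0 < Λ₁ i1 j := hfirst₁ j i1 hfi1 hmin1
  have hb : 0 < Λ₂ i1 j := hfirst₂ j i1 hfi1 hmin1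
  have ha' : 0 < Λ₁ i1' j' := hfirst₁ j' i1' hfi1' hmin1'
  have hb' : 0 < Λ₂ i1' j' := hfirst₂ j' i1' hfi1' hmin1'
  have hne : i1 ≠ i1' := fun h => hjj (by rw [← hfi1, h, hfi1'])
  have E0 := key i1 i1' hne
  rw [hfi1, hfi1'] at E0
  -- Claim for fiber j
  have H1 : (C₁ j j')^2 * (Λ₁ i1' j')^2 = (C₂ j j')^2 * (Λ₂ i1' j')^2 ∨
      (Λ₁ i1 j = 1 ∧ Λ₂ i1 j = 1) := by
    by_cases hcard : Finset.univ.filter (fun i => f i = j) = {i1}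
    · exact Or.inr ⟨(hsingle₁ j i1 hcard).1, (hsingle₂ j i1 hcard).1⟩
    · left
      obtain ⟨i2, hi2mem, hi2ne⟩ : ∃ i2 ∈ Finset.univ.filter (fun i => f i = j), i2 ≠ i1 := by
        by_contra hcon
        push_neg at hcon
        exact hcard (Finset.eq_singleton_iff_unique_mem.2
          ⟨Finset.min'_mem _ _, hcon⟩)
      have hfi2 : f i2 = j := by simpa using hi2mem
      have hu : Λ₁ i2 j ≠ 0 := (hpure₁ i2 j).2 hfi2.symm
      have E1 := key i1 i2 (Ne.symm hi2ne)
      rw [hfi1, hfi2, hC₁diag, hC₂diag] at E1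
      have E1' : Λ₁ i1 j * Λ₁ i2 j = Λ₂ i1 j * Λ₂ i2 j := by linear_combination E1
      have hi2ne' : i2 ≠ i1' := fun h => hjj (by rw [← hfi2, h, hfi1'])
      have E2 := key i2 i1' hi2ne'
      rw [hfi2, hfi1'] at E2
      have h5 : (Λ₁ i1 j * C₁ j j' * Λ₁ i1' j') * (Λ₁ i2 j * C₁ j j' * Λ₁ i1' j') =
          (Λ₂ i1 j * C₂ j j' * Λ₂ i1' j') * (Λ₂ i2 j * C₂ j j' * Λ₂ i1' j') := by
        rw [E0, E2]
      have haune : Λ₁ i1 j * Λ₁ i2 j ≠ 0 := mul_ne_zero ha.ne' hu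
      apply mul_left_cancel₀ haune
      linear_combination h5 - (C₂ j j')^2 * (Λ₂ i1' j')^2 * E1'
  -- Claim for fiber j'
  have H2 : (C₁ j j')^2 * (Λ₁ i1 j)^2 = (C₂ j j')^2 * (Λ₂ i1 j)^2 ∨
      (Λ₁ i1' j' = 1 ∧ Λ₂ i1' j' = 1) := by
    by_cases hcard : Finset.univ.filter (fun i => f i = j') = {i1'}
    · exact Or.inr ⟨(hsingle₁ j' i1' hcard).1, (hsingle₂ j' i1' hcard).1⟩
    · left
      obtain ⟨i2, hi2mem, hi2ne⟩ : ∃ i2 ∈ Finset.univ.filter (fun i => f i = j'), i2 ≠ i1' := by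
        by_contra hcon
        push_neg at hcon
        exact hcard (Finset.eq_singleton_iff_unique_mem.2
          ⟨Finset.min'_mem _ _, hcon⟩)
      have hfi2 : f i2 = j' := by simpa using hi2mem
      have hu : Λ₁ i2 j' ≠ 0 := (hpure₁ i2 j').2 hfi2.symm
      have E1 := key i1' i2 (Ne.symm hi2ne)
      rw [hfi1', hfi2, hC₁diag, hC₂diag] at E1
      have E1' : Λ₁ i1' j' * Λ₁ i2 j' = Λ₂ i1' j' * Λ₂ i2 j' := by linear_combination E1
      have hi2ne' : i1 ≠ i2 := fun h => hjj (by rw [← hfi1, h, hfi2])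
      have E2 := key i1 i2 hi2ne'
      rw [hfi1, hfi2] at E2
      have h5 : (Λ₁ i1 j * C₁ j j' * Λ₁ i1' j') * (Λ₁ i1 j * C₁ j j' * Λ₁ i2 j') =
          (Λ₂ i1 j * C₂ j j' * Λ₂ i1' j') * (Λ₂ i1 j * C₂ j j' * Λ₂ i2 j') := by
        rw [E0, E2]
      have haune : Λ₁ i1' j' * Λ₁ i2 j' ≠ 0 := mul_ne_zero ha'.ne' hu
      apply mul_left_cancel₀ haune
      linear_combination h5 - (C₂ j j')^2 * (Λ₂ i1 j)^2 * E1'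
  -- derive equality of squares
  have hsq : (C₁ j j')^2 = (C₂ j j')^2 := by
    rcases H1 with h1 | ⟨ha1, hb1⟩
    · rcases H2 with h2 | ⟨ha1', hb1'⟩
      · -- general case
        have hE0sq : (C₁ j j')^2 * (Λ₁ i1 j * Λ₁ i1' j')^2 =
            (C₂ j j')^2 * (Λ₂ i1 j * Λ₂ i1' j')^2 := by
          linear_combination (Λ₁ i1 j * C₁ j j' * Λ₁ i1' j' +
            Λ₂ i1 j * C₂ j j' * Λ₂ i1' j') * E0
        have h12 : (C₁ j j')^2 * (C₁ j j')^2 * (Λ₁ i1 j * Λ₁ i1' j')^2 =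
            (C₂ j j')^2 * (C₂ j j')^2 * (Λ₂ i1 j * Λ₂ i1' j')^2 := by
          linear_combination (C₁ j j')^2 * (Λ₁ i1 j)^2 * h1 +
            (C₂ j j')^2 * (Λ₂ i1' j')^2 * h2
        have hzero : ((C₁ j j')^2 - (C₂ j j')^2) * ((C₁ j j')^2 * (Λ₁ i1 j * Λ₁ i1' j')^2)
            = 0 := by
          linear_combination h12 - (C₂ j j')^2 * hE0sq
        rcases mul_eq_zero.1 hzero with h | h
        · linarith [sub_eq_zero.1 h]
        · have hc0 : (C₁ j j')^2 = 0 := by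
            rcases mul_eq_zero.1 h with h' | h'
            · exact h'
            · exact absurd h' (pow_ne_zero 2 (mul_ne_zero ha.ne' ha'.ne'))
          have hd0 : (C₂ j j')^2 = 0 := by
            have : (C₂ j j')^2 * (Λ₂ i1' j')^2 = 0 := by
              rw [← h1, hc0, zero_mul]
            rcases mul_eq_zero.1 this with h' | h'
            · exact h'
            · exact absurd h' (pow_ne_zero 2 hb'.ne')
          rw [hc0, hd0]
      · rw [ha1', hb1'] at h1; simpa using h1
    · rcases H2 with h2 | ⟨ha1', hb1'⟩
      · rw [ha1, hb1] at h2; simpa using h2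
      · rw [ha1, hb1, ha1', hb1'] at E0
        have : C₁ j j' = C₂ j j' := by linear_combination E0
        rw [this]
  -- conclude from equal squares and sign agreement
  have hcd : (C₁ j j' - C₂ j j') * (C₁ j j' + C₂ j j') = 0 := by
    linear_combination hsq
  rcases mul_eq_zero.1 hcd with h | h
  · exact sub_eq_zero.1 h
  · have hcd' : C₁ j j' = -(C₂ j j') := by linarith
    rw [hcd'] at E0
    have hz : C₂ j j' * (Λ₁ i1 j * Λ₁ i1' j' + Λ₂ i1 j * Λ₂ i1' j') = 0 := by
      linear_combination -E0
    have hd0 : C₂ j j' = 0 := by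
      rcases mul_eq_zero.1 hz with h' | h'
      · exact h'
      · nlinarith [mul_pos ha ha', mul_pos hb hb']
    rw [hcd', hd0, neg_zero]
end

section
/- (Identifiability of Λ.) Let f : {1,…,p} → {1,…,k} be surjective. For t ∈ {1, 2}, let Λ_t be a p×k real matrix that is pure with factor map f, let C_t be a k×k real symmetric positive definite matrix with unit diagonal, and let D_t be a diagonal p×p real matrix with nonnegative diagonal entries. Assume for each t: (i) for every factor j whose fiber f⁻¹(j) is a singleton {i}, Λ_t has Λ_{ij} = 1 and D_t has D_{ii} = 0; (ii) for every factor j, the first indicator i = min f⁻¹(j) has positive loading Λ_{ij} > 0; (iii) every factor j that is independent of all other factors (i.e., (C_t)_{jr} = 0 for all r ≠ j) has either exactly one indicator or at least three indicators (|f⁻¹(j)| = 1 or |f⁻¹(j)| ≥ 3). If Λ₁C₁Λ₁ᵀ + D₁ = Λ₂C₂Λ₂ᵀ + D₂, then Λ₁ = Λ₂. -/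
/-!
On the off-diagonal, `ΛCΛᵀ + D` only sees the products `λ_a c_{f a, f b} λ_b` of the nonzero
loadings `λ_a = Λ_{a, f a}`. For distinct indicators `i₀, i₁` of one factor and any third
indicator `i₂` with `c_{f i₁, f i₂} ≠ 0`, the unit diagonal of `C` gives the triad identity
`Σ_{i₀ i₁} Σ_{i₀ i₂} = λ_{i₀}² Σ_{i₁ i₂}`, so the covariance determines `λ_{i₀}²`. Such a triad
exists for every factor with at least two indicators: a third indicator of the same factor, or,
when there are exactly two, an indicator of a factor correlated with it. The sign convention at
the first indicator then fixes `λ_{i₀}`, and `Σ_{i₀ i} = λ_{i₀} λ_i` recovers the loadings of the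
other indicators of the factor. Factors with one indicator have loading `1` by convention.
-/

open Finset

namespace Matrix

variable {ι κ R : Type*}

def IsPure [Zero R] (Λ : Matrix ι κ R) (f : ι → κ) : Prop :=
  ∀ i j, Λ i j ≠ 0 ↔ j = f i

namespace IsPure

variable {f : ι → κ} {Λ Λ₁ Λ₂ : Matrix ι κ R}

section Zero

variable [Zero R]

theorem apply_eq_zero (hΛ : IsPure Λ f) {i : ι} {j : κ} (hj : j ≠ f i) : Λ i j = 0 :=
  not_not.1 fun h => hj ((hΛ i j).1 h)

theorem apply_self_ne_zero (hΛ : IsPure Λ f) (i : ι) : Λ i (f i) ≠ 0 :=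
  (hΛ i (f i)).2 rfl

theorem ext_of_apply_self (h₁ : IsPure Λ₁ f) (h₂ : IsPure Λ₂ f)
    (h : ∀ i, Λ₁ i (f i) = Λ₂ i (f i)) : Λ₁ = Λ₂ := by
  ext i j
  by_cases hj : j = f i
  · exact hj ▸ h i
  · rw [h₁.apply_eq_zero hj, h₂.apply_eq_zero hj]

end Zero

variable [Fintype κ]

theorem mul_mul_transpose_apply [NonUnitalNonAssocSemiring R] (hΛ : IsPure Λ f)
    (C : Matrix κ κ R) (i i' : ι) :
    (Λ * C * Λᵀ) i i' = Λ i (f i) * C (f i) (f i') * Λ i' (f i') := by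
  rw [mul_apply, sum_eq_single (f i') (fun j _ hj => by rw [transpose_apply,
      hΛ.apply_eq_zero hj, mul_zero]) (by simp), mul_apply,
    sum_eq_single (f i) (fun j _ hj => by rw [hΛ.apply_eq_zero hj, zero_mul]) (by simp),
    transpose_apply]

theorem mul_mul_transpose_apply_ne_zero [NonUnitalNonAssocSemiring R] [NoZeroDivisors R]
    (hΛ : IsPure Λ f) {C : Matrix κ κ R} {i i' : ι} (hC : C (f i) (f i') ≠ 0) :
    (Λ * C * Λᵀ) i i' ≠ 0 := by
  rw [hΛ.mul_mul_transpose_apply]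
  exact mul_ne_zero (mul_ne_zero (hΛ.apply_self_ne_zero i) hC) (hΛ.apply_self_ne_zero i')

theorem mul_mul_transpose_apply_mul_apply [CommSemiring R] (hΛ : IsPure Λ f)
    {C : Matrix κ κ R} (hC : ∀ j, C j j = 1) {i₀ i₁ : ι} (hf : f i₁ = f i₀) (i₂ : ι) :
    (Λ * C * Λᵀ) i₀ i₁ * (Λ * C * Λᵀ) i₀ i₂ = Λ i₀ (f i₀) ^ 2 * (Λ * C * Λᵀ) i₁ i₂ := by
  simp only [hΛ.mul_mul_transpose_apply, hf, hC]
  ring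

variable [CommRing R] [IsDomain R] {C₁ C₂ : Matrix κ κ R}

theorem sq_apply_self_eq_of_triad (h₁ : IsPure Λ₁ f) (h₂ : IsPure Λ₂ f)
    (hC₁ : ∀ j, C₁ j j = 1) (hC₂ : ∀ j, C₂ j j = 1)
    (hoff : ∀ i i', i ≠ i' → (Λ₁ * C₁ * Λ₁ᵀ) i i' = (Λ₂ * C₂ * Λ₂ᵀ) i i')
    {i₀ i₁ i₂ : ι} (h01 : i₀ ≠ i₁) (h02 : i₀ ≠ i₂) (h12 : i₁ ≠ i₂) (hf : f i₁ = f i₀)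
    (hC : C₁ (f i₁) (f i₂) ≠ 0) :
    Λ₁ i₀ (f i₀) ^ 2 = Λ₂ i₀ (f i₀) ^ 2 := by
  have hS : (Λ₂ * C₂ * Λ₂ᵀ) i₁ i₂ ≠ 0 := hoff i₁ i₂ h12 ▸ h₁.mul_mul_transpose_apply_ne_zero hC
  have triad₁ := h₁.mul_mul_transpose_apply_mul_apply hC₁ hf i₂
  rw [hoff _ _ h01, hoff _ _ h02, hoff _ _ h12,
    h₂.mul_mul_transpose_apply_mul_apply hC₂ hf i₂] at triad₁
  exact (mul_right_cancel₀ hS triad₁).symm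

theorem apply_self_eq_of_apply_self_eq (h₁ : IsPure Λ₁ f) (h₂ : IsPure Λ₂ f)
    (hC₁ : ∀ j, C₁ j j = 1) (hC₂ : ∀ j, C₂ j j = 1)
    (hoff : ∀ i i', i ≠ i' → (Λ₁ * C₁ * Λ₁ᵀ) i i' = (Λ₂ * C₂ * Λ₂ᵀ) i i')
    {i₀ i : ι} (hf : f i = f i₀) (h₀ : Λ₁ i₀ (f i₀) = Λ₂ i₀ (f i₀)) :
    Λ₁ i (f i) = Λ₂ i (f i) := by
  obtain rfl | hne := eq_or_ne i₀ i
  · exact h₀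
  have h := hoff i₀ i hne
  rw [h₁.mul_mul_transpose_apply, h₂.mul_mul_transpose_apply, hf, hC₁, hC₂, mul_one,
    mul_one, h₀] at h
  rw [hf]
  exact mul_left_cancel₀ (h₀ ▸ h₁.apply_self_ne_zero i₀) h

theorem sq_apply_self_eq_of_two_le_card [Fintype ι] [DecidableEq κ]
    (hf : Function.Surjective f) (h₁ : IsPure Λ₁ f) (h₂ : IsPure Λ₂ f)
    (hC₁ : ∀ j, C₁ j j = 1) (hC₂ : ∀ j, C₂ j j = 1)
    (hoff : ∀ i i', i ≠ i' → (Λ₁ * C₁ * Λ₁ᵀ) i i' = (Λ₂ * C₂ * Λ₂ᵀ) i i') (i₀ : ι)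
    (hindep : (∀ r, r ≠ f i₀ → C₁ (f i₀) r = 0) →
      #{i' | f i' = f i₀} = 1 ∨ 3 ≤ #{i' | f i' = f i₀})
    (hcard : 2 ≤ #{i' | f i' = f i₀}) :
    Λ₁ i₀ (f i₀) ^ 2 = Λ₂ i₀ (f i₀) ^ 2 := by
  obtain ⟨i₁, hi₁, h10⟩ := exists_mem_ne hcard i₀
  rw [mem_filter_univ] at hi₁
  have triad := fun i₂ => sq_apply_self_eq_of_triad (i₂ := i₂) h₁ h₂ hC₁ hC₂ hoff h10.symm
  by_cases h3 : 3 ≤ #{i' | f i' = f i₀}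
  · classical
    obtain ⟨i₂, hi₂, h21⟩ := exists_mem_ne (s := ({i' | f i' = f i₀} : Finset ι).erase i₀)
      (by rw [card_erase_of_mem (by simp)]; omega) i₁
    obtain ⟨h20, hi₂⟩ := mem_erase.1 hi₂
    rw [mem_filter_univ] at hi₂
    exact triad i₂ h20.symm h21.symm hi₁ (by rw [hi₁, hi₂, hC₁]; exact one_ne_zero)
  · obtain ⟨r, hr, hCr⟩ : ∃ r, r ≠ f i₀ ∧ C₁ (f i₀) r ≠ 0 := by
      by_contra! h
      rcases hindep h with h | h <;> omega
    obtain ⟨i₂, rfl⟩ := hf r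
    exact triad i₂ (fun h => hr (congrArg f h).symm) (fun h => hr ((congrArg f h).symm.trans hi₁))
      hi₁ (hi₁ ▸ hCr)

end IsPure

theorem apply_eq_of_add_eq_add_of_isDiag {n : Type*} [AddZeroClass R] {A₁ A₂ D₁ D₂ : Matrix n n R}
    (h : A₁ + D₁ = A₂ + D₂) (hD₁ : D₁.IsDiag) (hD₂ : D₂.IsDiag) {i i' : n} (hi : i ≠ i') :
    A₁ i i' = A₂ i i' := by
  simpa [hD₁ hi, hD₂ hi] using congrFun₂ h i i'

end Matrix

open Matrix

theorem factor_loadings_identifiable_general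
    {p k : ℕ} (f : Fin p → Fin k) (hf : Function.Surjective f)
    (Λ₁ Λ₂ : Matrix (Fin p) (Fin k) ℝ)
    (C₁ C₂ : Matrix (Fin k) (Fin k) ℝ)
    (D₁ D₂ : Matrix (Fin p) (Fin p) ℝ)
    (hpure₁ : ∀ (i : Fin p) (j : Fin k), Λ₁ i j ≠ 0 ↔ j = f i)
    (hpure₂ : ∀ (i : Fin p) (j : Fin k), Λ₂ i j ≠ 0 ↔ j = f i)
    (hC₁diag : ∀ j, C₁ j j = 1) (hC₂diag : ∀ j, C₂ j j = 1)
    (hD₁ : D₁.IsDiag) (hD₂ : D₂.IsDiag)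
    (hsingle₁ : ∀ (j : Fin k) (i : Fin p),
      Finset.univ.filter (fun i' => f i' = j) = {i} → Λ₁ i j = 1 ∧ D₁ i i = 0)
    (hsingle₂ : ∀ (j : Fin k) (i : Fin p),
      Finset.univ.filter (fun i' => f i' = j) = {i} → Λ₂ i j = 1 ∧ D₂ i i = 0)
    (hfirst₁ : ∀ (j : Fin k) (i : Fin p),
      f i = j → (∀ i', f i' = j → i ≤ i') → 0 < Λ₁ i j)
    (hfirst₂ : ∀ (j : Fin k) (i : Fin p),
      f i = j → (∀ i', f i' = j → i ≤ i') → 0 < Λ₂ i j)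
    (hindep₁ : ∀ j : Fin k, (∀ r, r ≠ j → C₁ j r = 0) →
      (Finset.univ.filter (fun i' => f i' = j)).card = 1 ∨
        3 ≤ (Finset.univ.filter (fun i' => f i' = j)).card)
    (heq : Λ₁ * C₁ * Λ₁ᵀ + D₁ = Λ₂ * C₂ * Λ₂ᵀ + D₂) :
    Λ₁ = Λ₂ := by
  have hoff := fun i i' (hi : i ≠ i') => apply_eq_of_add_eq_add_of_isDiag heq hD₁ hD₂ hi
  refine IsPure.ext_of_apply_self hpure₁ hpure₂ fun i => ?_
  obtain ⟨i₀, hi₀, hmin⟩ := (univ.filter (f · = f i)).exists_min_image id ⟨i, by simp⟩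
  simp only [mem_filter_univ, id] at hi₀ hmin
  rw [← hi₀] at hmin
  have hsq : Λ₁ i₀ (f i₀) ^ 2 = Λ₂ i₀ (f i₀) ^ 2 := by
    rcases Nat.lt_or_ge #{i' | f i' = f i₀} 2 with hcard | hcard
    · have hsingle : ({i' | f i' = f i₀} : Finset _) = {i₀} :=
        eq_singleton_iff_unique_mem.2 ⟨by simp,
          fun x hx => card_le_one.1 (Nat.le_of_lt_succ hcard) x hx i₀ (by simp)⟩
      rw [(hsingle₁ _ _ hsingle).1, (hsingle₂ _ _ hsingle).1]
    · exact IsPure.sq_apply_self_eq_of_two_le_card hf hpure₁ hpure₂ hC₁diag hC₂diag hoff i₀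
        (hindep₁ (f i₀)) hcard
  have h₀ := (sq_eq_sq₀ (hfirst₁ _ i₀ rfl hmin).le (hfirst₂ _ i₀ rfl hmin).le).1 hsq
  exact IsPure.apply_self_eq_of_apply_self_eq hpure₁ hpure₂ hC₁diag hC₂diag hoff hi₀.symm h₀

/-- **Identifiability of Λ.** Under the identifying conditions of
Statement 7, together with the requirement that every factor that is independent of
all other factors has either exactly one or at least three indicators, two pure
parameterizations implying the same covariance matrix `ΛCΛᵀ + D` have equal
loading matrices. -/
theorem factor_loadings_identifiable
    {p k : ℕ} (f : Fin p → Fin k) (hf : Function.Surjective f)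
    (Λ₁ Λ₂ : Matrix (Fin p) (Fin k) ℝ)
    (C₁ C₂ : Matrix (Fin k) (Fin k) ℝ)
    (D₁ D₂ : Matrix (Fin p) (Fin p) ℝ)
    (hpure₁ : ∀ (i : Fin p) (j : Fin k), Λ₁ i j ≠ 0 ↔ j = f i)
    (hpure₂ : ∀ (i : Fin p) (j : Fin k), Λ₂ i j ≠ 0 ↔ j = f i)
    (hC₁ : C₁.PosDef) (hC₂ : C₂.PosDef)
    (hC₁diag : ∀ j, C₁ j j = 1) (hC₂diag : ∀ j, C₂ j j = 1)
    (hD₁ : D₁.IsDiag) (hD₂ : D₂.IsDiag)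
    (hD₁nonneg : ∀ i, 0 ≤ D₁ i i) (hD₂nonneg : ∀ i, 0 ≤ D₂ i i)
    (hsingle₁ : ∀ (j : Fin k) (i : Fin p),
      Finset.univ.filter (fun i' => f i' = j) = {i} → Λ₁ i j = 1 ∧ D₁ i i = 0)
    (hsingle₂ : ∀ (j : Fin k) (i : Fin p),
      Finset.univ.filter (fun i' => f i' = j) = {i} → Λ₂ i j = 1 ∧ D₂ i i = 0)
    (hfirst₁ : ∀ (j : Fin k) (i : Fin p),
      f i = j → (∀ i', f i' = j → i ≤ i') → 0 < Λ₁ i j)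
    (hfirst₂ : ∀ (j : Fin k) (i : Fin p),
      f i = j → (∀ i', f i' = j → i ≤ i') → 0 < Λ₂ i j)
    (hindep₁ : ∀ j : Fin k, (∀ r, r ≠ j → C₁ j r = 0) →
      (Finset.univ.filter (fun i' => f i' = j)).card = 1 ∨
        3 ≤ (Finset.univ.filter (fun i' => f i' = j)).card)
    (hindep₂ : ∀ j : Fin k, (∀ r, r ≠ j → C₂ j r = 0) →
      (Finset.univ.filter (fun i' => f i' = j)).card = 1 ∨
        3 ≤ (Finset.univ.filter (fun i' => f i' = j)).card)
    (heq : Λ₁ * C₁ * Λ₁ᵀ + D₁ = Λ₂ * C₂ * Λ₂ᵀ + D₂) :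
    Λ₁ = Λ₂ :=
  factor_loadings_identifiable_general f hf Λ₁ Λ₂ C₁ C₂ D₁ D₂ hpure₁ hpure₂ hC₁diag hC₂diag hD₁ hD₂
    hsingle₁ hsingle₂ hfirst₁ hfirst₂ hindep₁ heq
end

section
/- (Identifiability of D.) Let f : {1,…,p} → {1,…,k} be surjective. For t ∈ {1, 2}, let Λ_t be a p×k real matrix that is pure with factor map f, let C_t be a k×k real symmetric positive definite matrix with unit diagonal, and let D_t be a diagonal p×p real matrix with nonnegative diagonal entries. Assume for each t: (i) for every factor j whose fiber f⁻¹(j) is a singleton {i}, Λ_t has Λ_{ij} = 1 and D_t has D_{ii} = 0; (ii) every factor j that is independent of all other factors (i.e., (C_t)_{jr} = 0 for all r ≠ j) has either exactly one indicator or at least three indicators (|f⁻¹(j)| = 1 or |f⁻¹(j)| ≥ 3). If Λ₁C₁Λ₁ᵀ + D₁ = Λ₂C₂Λ₂ᵀ + D₂, then D₁ = D₂. -/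
open Matrix

lemma pureEntry {p k : ℕ} (f : Fin p → Fin k) (Λ : Matrix (Fin p) (Fin k) ℝ)
    (C : Matrix (Fin k) (Fin k) ℝ)
    (hpure : ∀ i j, Λ i j ≠ 0 ↔ j = f i) (i l : Fin p) :
    (Λ * C * Λᵀ) i l = Λ i (f i) * C (f i) (f l) * Λ l (f l) := by
  have hz : ∀ (m : Fin p) (j : Fin k), j ≠ f m → Λ m j = 0 := by
    intro m j h; by_contra hne; exact h ((hpure m j).mp hne)
  rw [Matrix.mul_apply]
  rw [Finset.sum_eq_single (f l)]
  · rw [Matrix.mul_apply, Finset.sum_eq_single (f i)]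
    · simp [Matrix.transpose_apply]
    · intro j _ hj; rw [hz i j hj]; ring
    · intro h; exact absurd (Finset.mem_univ _) h
  · intro j _ hj; rw [Matrix.transpose_apply, hz l j hj]; ring
  · intro h; exact absurd (Finset.mem_univ _) h

/-- **Identifiability of D.** Under the conditions that
single-indicator factors have loading `1` and residual `0`, and that every factor
independent of all other factors has either exactly one or at least three indicators,
two pure parameterizations implying the same covariance matrix `ΛCΛᵀ + D` have
equal residual variance matrices. -/
theorem residual_variances_identifiable
    {p k : ℕ} (f : Fin p → Fin k) (hf : Function.Surjective f)
    (Λ₁ Λ₂ : Matrix (Fin p) (Fin k) ℝ)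
    (C₁ C₂ : Matrix (Fin k) (Fin k) ℝ)
    (D₁ D₂ : Matrix (Fin p) (Fin p) ℝ)
    (hpure₁ : ∀ (i : Fin p) (j : Fin k), Λ₁ i j ≠ 0 ↔ j = f i)
    (hpure₂ : ∀ (i : Fin p) (j : Fin k), Λ₂ i j ≠ 0 ↔ j = f i)
    (hC₁ : C₁.PosDef) (hC₂ : C₂.PosDef)
    (hC₁diag : ∀ j, C₁ j j = 1) (hC₂diag : ∀ j, C₂ j j = 1)
    (hD₁ : D₁.IsDiag) (hD₂ : D₂.IsDiag)
    (hD₁nonneg : ∀ i, 0 ≤ D₁ i i) (hD₂nonneg : ∀ i, 0 ≤ D₂ i i)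
    (hsingle₁ : ∀ (j : Fin k) (i : Fin p),
      Finset.univ.filter (fun i' => f i' = j) = {i} → Λ₁ i j = 1 ∧ D₁ i i = 0)
    (hsingle₂ : ∀ (j : Fin k) (i : Fin p),
      Finset.univ.filter (fun i' => f i' = j) = {i} → Λ₂ i j = 1 ∧ D₂ i i = 0)
    (hindep₁ : ∀ j : Fin k, (∀ r, r ≠ j → C₁ j r = 0) →
      (Finset.univ.filter (fun i' => f i' = j)).card = 1 ∨
        3 ≤ (Finset.univ.filter (fun i' => f i' = j)).card)
    (hindep₂ : ∀ j : Fin k, (∀ r, r ≠ j → C₂ j r = 0) →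
      (Finset.univ.filter (fun i' => f i' = j)).card = 1 ∨
        3 ≤ (Finset.univ.filter (fun i' => f i' = j)).card)
    (heq : Λ₁ * C₁ * Λ₁ᵀ + D₁ = Λ₂ * C₂ * Λ₂ᵀ + D₂) :
    D₁ = D₂ := by
  have ha : ∀ m : Fin p, Λ₁ m (f m) ≠ 0 := fun m => (hpure₁ m (f m)).mpr rfl
  have hb : ∀ m : Fin p, Λ₂ m (f m) ≠ 0 := fun m => (hpure₂ m (f m)).mpr rfl
  have hE : ∀ i l : Fin p,
      Λ₁ i (f i) * C₁ (f i) (f l) * Λ₁ l (f l) + D₁ i l =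
      Λ₂ i (f i) * C₂ (f i) (f l) * Λ₂ l (f l) + D₂ i l := by
    intro i l
    have h := congrFun (congrFun heq i) l
    simpa [Matrix.add_apply, pureEntry f Λ₁ C₁ hpure₁, pureEntry f Λ₂ C₂ hpure₂] using h
  have hoff : ∀ i l : Fin p, i ≠ l →
      Λ₁ i (f i) * C₁ (f i) (f l) * Λ₁ l (f l) =
      Λ₂ i (f i) * C₂ (f i) (f l) * Λ₂ l (f l) := by
    intro i l h
    have h1 := hE i l
    rw [hD₁ h, hD₂ h] at h1
    linarith
  have hdiag : ∀ i : Fin p,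
      Λ₁ i (f i) * Λ₁ i (f i) + D₁ i i = Λ₂ i (f i) * Λ₂ i (f i) + D₂ i i := by
    intro i
    have h1 := hE i i
    rw [hC₁diag, hC₂diag] at h1
    linarith
  -- key: equal diagonals
  have key : ∀ i : Fin p, D₁ i i = D₂ i i := by
    intro i
    set F := Finset.univ.filter (fun i' => f i' = f i) with hF
    have hiF : i ∈ F := by simp [hF]
    rcases lt_or_ge F.card 2 with hc | hc
    · -- card 1 : singleton case
      have hc1 : F.card = 1 := by
        have : 0 < F.card := Finset.card_pos.mpr ⟨i, hiF⟩
        omega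
      obtain ⟨x, hx⟩ := Finset.card_eq_one.mp hc1
      have hxi : x = i := by
        have := hiF
        rw [hx] at this
        exact (Finset.mem_singleton.mp this).symm
      rw [hxi] at hx
      exact (hsingle₁ (f i) i hx).2.trans (hsingle₂ (f i) i hx).2.symm
    · -- card ≥ 2 : show squared loadings agree
      have h2 : 1 < F.card := by omega
      obtain ⟨a', ha'F, ha'i⟩ := Finset.exists_mem_ne h2 i
      have hfa' : f a' = f i := by
        have := ha'F
        simp only [hF, Finset.mem_filter] at this
        exact this.2
      suffices hsq : Λ₁ i (f i) * Λ₁ i (f i) = Λ₂ i (f i) * Λ₂ i (f i) by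
        have := hdiag i; linarith
      have hca1 : C₁ (f i) (f a') = 1 := by rw [hfa', hC₁diag]
      have hca2 : C₂ (f i) (f a') = 1 := by rw [hfa', hC₂diag]
      have E1 : Λ₁ i (f i) * Λ₁ a' (f a') = Λ₂ i (f i) * Λ₂ a' (f a') := by
        have h1 := hoff i a' (Ne.symm ha'i)
        rw [hca1, hca2] at h1
        linarith
      rcases lt_or_ge F.card 3 with hc3 | hc3
      · -- card = 2 : use a correlated factor
        have hc2 : F.card = 2 := by omega
        have hne : ¬ (∀ r, r ≠ f i → C₁ (f i) r = 0) := by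
          intro h
          rcases hindep₁ (f i) h with h1 | h3
          · rw [← hF] at h1; omega
          · rw [← hF] at h3; omega
        push_neg at hne
        obtain ⟨r, hrj, hc₁⟩ := hne
        obtain ⟨l, hl⟩ := hf r
        have hli : l ≠ i := fun h => hrj (by rw [← hl, h])
        have hla : l ≠ a' := fun h => hrj (by rw [← hl, h, hfa'])
        have hc₁' : C₁ (f i) (f l) ≠ 0 := by rw [hl]; exact hc₁
        have E2 : Λ₁ i (f i) * C₁ (f i) (f l) * Λ₁ l (f l) =
            Λ₂ i (f i) * C₂ (f i) (f l) * Λ₂ l (f l) := hoff i l (Ne.symm hli)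
        have hca : C₁ (f a') (f l) = C₁ (f i) (f l) := by rw [hfa']
        have hcb : C₂ (f a') (f l) = C₂ (f i) (f l) := by rw [hfa']
        have E3 : Λ₁ a' (f a') * C₁ (f i) (f l) * Λ₁ l (f l) =
            Λ₂ a' (f a') * C₂ (f i) (f l) * Λ₂ l (f l) := by
          have h1 := hoff a' l (Ne.symm hla)
          rw [hca, hcb] at h1
          exact h1
        -- derive c₁² λ₁ₗ² = c₂² λ₂ₗ²
        have hprod : (Λ₁ i (f i) * Λ₁ a' (f a')) * (C₁ (f i) (f l) ^ 2 * Λ₁ l (f l) ^ 2) =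
            (Λ₁ i (f i) * Λ₁ a' (f a')) * (C₂ (f i) (f l) ^ 2 * Λ₂ l (f l) ^ 2) := by
          calc (Λ₁ i (f i) * Λ₁ a' (f a')) * (C₁ (f i) (f l) ^ 2 * Λ₁ l (f l) ^ 2)
              = (Λ₁ i (f i) * C₁ (f i) (f l) * Λ₁ l (f l)) *
                (Λ₁ a' (f a') * C₁ (f i) (f l) * Λ₁ l (f l)) := by ring
            _ = (Λ₂ i (f i) * C₂ (f i) (f l) * Λ₂ l (f l)) *
                (Λ₂ a' (f a') * C₂ (f i) (f l) * Λ₂ l (f l)) := by rw [E2, E3]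
            _ = (Λ₂ i (f i) * Λ₂ a' (f a')) * (C₂ (f i) (f l) ^ 2 * Λ₂ l (f l) ^ 2) := by ring
            _ = (Λ₁ i (f i) * Λ₁ a' (f a')) * (C₂ (f i) (f l) ^ 2 * Λ₂ l (f l) ^ 2) := by
                rw [← E1]
        have hkey := mul_left_cancel₀ (mul_ne_zero (ha i) (ha a')) hprod
        have hnz : C₁ (f i) (f l) ^ 2 * Λ₁ l (f l) ^ 2 ≠ 0 :=
          mul_ne_zero (pow_ne_zero _ hc₁') (pow_ne_zero _ (ha l))
        have hfin : (C₁ (f i) (f l) ^ 2 * Λ₁ l (f l) ^ 2) * (Λ₁ i (f i) * Λ₁ i (f i)) =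
            (C₁ (f i) (f l) ^ 2 * Λ₁ l (f l) ^ 2) * (Λ₂ i (f i) * Λ₂ i (f i)) := by
          calc (C₁ (f i) (f l) ^ 2 * Λ₁ l (f l) ^ 2) * (Λ₁ i (f i) * Λ₁ i (f i))
              = (Λ₁ i (f i) * C₁ (f i) (f l) * Λ₁ l (f l)) ^ 2 := by ring
            _ = (Λ₂ i (f i) * C₂ (f i) (f l) * Λ₂ l (f l)) ^ 2 := by rw [E2]
            _ = (C₂ (f i) (f l) ^ 2 * Λ₂ l (f l) ^ 2) * (Λ₂ i (f i) * Λ₂ i (f i)) := by ring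
            _ = _ := by rw [← hkey]
        exact mul_left_cancel₀ hnz hfin
      · -- card ≥ 3 : third indicator
        have hsub : ({i, a'} : Finset (Fin p)) ⊆ F := by
          intro x hx
          rcases Finset.mem_insert.mp hx with h | h
          · rw [h]; exact hiF
          · rw [Finset.mem_singleton.mp h]; exact ha'F
        have hcard2 : ({i, a'} : Finset (Fin p)).card ≤ 2 := by
          apply le_trans (Finset.card_insert_le i {a'}); simp
        have hsd : 0 < (F \ ({i, a'} : Finset (Fin p))).card := by
          have h1 := Finset.le_card_sdiff ({i, a'} : Finset (Fin p)) F
          omega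
        obtain ⟨b', hb'⟩ := Finset.card_pos.mp hsd
        rw [Finset.mem_sdiff] at hb'
        obtain ⟨hb'F, hb'ni⟩ := hb'
        have hb'i : b' ≠ i := fun h => hb'ni (by simp [h])
        have hb'a : b' ≠ a' := fun h => hb'ni (by simp [h])
        have hfb' : f b' = f i := by
          have := hb'F
          simp only [hF, Finset.mem_filter] at this
          exact this.2
        have hcb1 : C₁ (f i) (f b') = 1 := by rw [hfb', hC₁diag]
        have hcb2 : C₂ (f i) (f b') = 1 := by rw [hfb', hC₂diag]
        have hcab1 : C₁ (f a') (f b') = 1 := by rw [hfa', hfb', hC₁diag]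
        have hcab2 : C₂ (f a') (f b') = 1 := by rw [hfa', hfb', hC₂diag]
        have E2 : Λ₁ i (f i) * Λ₁ b' (f b') = Λ₂ i (f i) * Λ₂ b' (f b') := by
          have h1 := hoff i b' (Ne.symm hb'i)
          rw [hcb1, hcb2] at h1
          linarith
        have E3 : Λ₁ a' (f a') * Λ₁ b' (f b') = Λ₂ a' (f a') * Λ₂ b' (f b') := by
          have h1 := hoff a' b' (Ne.symm hb'a)
          rw [hcab1, hcab2] at h1
          linarith
        have hnz : Λ₁ a' (f a') * Λ₁ b' (f b') ≠ 0 := mul_ne_zero (ha a') (ha b')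
        have hfin : (Λ₁ i (f i) * Λ₁ i (f i)) * (Λ₁ a' (f a') * Λ₁ b' (f b')) =
            (Λ₂ i (f i) * Λ₂ i (f i)) * (Λ₁ a' (f a') * Λ₁ b' (f b')) := by
          calc (Λ₁ i (f i) * Λ₁ i (f i)) * (Λ₁ a' (f a') * Λ₁ b' (f b'))
              = (Λ₁ i (f i) * Λ₁ a' (f a')) * (Λ₁ i (f i) * Λ₁ b' (f b')) := by ring
            _ = (Λ₂ i (f i) * Λ₂ a' (f a')) * (Λ₂ i (f i) * Λ₂ b' (f b')) := by
                rw [E1, E2]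
            _ = (Λ₂ i (f i) * Λ₂ i (f i)) * (Λ₂ a' (f a') * Λ₂ b' (f b')) := by ring
            _ = _ := by rw [← E3]
        exact mul_right_cancel₀ hnz hfin
  ext i l
  rcases eq_or_ne i l with rfl | h
  · exact key i
  · rw [hD₁ h, hD₂ h]
end
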